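/- Let F : ℝⁿ → ℝ be Lipschitz with constant L and bounded, and let G_ν be the heat kernel on ℝⁿ. Then for each i and each t > 0, |∫_{ℝⁿ} F(x - y)·∂_iG_ν(t, y) dy| ≤ L·∫_{y_i ≥ 0} (y_i/(νt))·y_i·G_ν(t, y) dy, and consequently the spatial convolution |F ∗ ∂_iG_ν(t, ·)| is bounded by L times a second-moment constant of the Gaussian, uniformly in x. (Key step: ∫F(x-y)∂_iG_ν(t,y)dy = ∫_{y_i≥0}(F(x-y) - F(x-y^{-i}))·(-y_i/(2νt))G_ν(t,y)dy where y^{-i} flips the sign of the i-th coordinate, using oddness of ∂_iG_ν in y_i.) -/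

import Mathlib

open Real MeasureTheory

open scoped InnerProductSpace

/-!
Work in a finite-dimensional real inner product space with a unit vector `e` in place of the
coordinate direction (`y i = ⟪EuclideanSpace.single i 1, y⟫`). The reflection `y ↦ y'` across
`eᗮ` preserves volume and the Gaussian and negates `⟪e, y⟫`, so `∂_e G` is odd. Folding the
half-space `⟪e, y⟫ < 0` onto `⟪e, y⟫ > 0` turns `∫ F (x - y) ∂_e G y` into
`∫_{⟪e, y⟫ ≥ 0} (F (x - y) - F (x - y')) ∂_e G y`, and there `‖y - y'‖ = 2 ⟪e, y⟫`, so the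
Lipschitz bound controls the integrand by `2 L ⟪e, y⟫ |∂_e G y|`.
-/

theorem integral_eq_setIntegral_add_comp {α G : Type*} [MeasurableSpace α] [NormedAddCommGroup G]
    [NormedSpace ℝ G] {μ : Measure α} {R : α → α} (hR : MeasurePreserving R μ μ)
    (hRe : MeasurableEmbedding R) {S : Set α} (hS : MeasurableSet S) (hRS : R ⁻¹' Sᶜ =ᵐ[μ] S)
    {g : α → G} (hg : Integrable g μ) :
    ∫ y, g y ∂μ = ∫ y in S, (g y + g (R y)) ∂μ := by
  rw [← integral_add_compl hS hg, ← hR.setIntegral_preimage_emb hRe g Sᶜ,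
    setIntegral_congr_set hRS]
  exact (integral_add hg.integrableOn ((hR.integrable_comp_emb hRe).mpr hg).integrableOn).symm

theorem setOf_pos_ae_eq_setOf_nonneg {E : Type*} [NormedAddCommGroup E] [NormedSpace ℝ E]
    [MeasurableSpace E] [BorelSpace E] [FiniteDimensional ℝ E] (μ : Measure E)
    [μ.IsAddHaarMeasure] {ℓ : E →ₗ[ℝ] ℝ} (hℓ : ℓ ≠ 0) : {y | 0 < ℓ y} =ᵐ[μ] {y | 0 ≤ ℓ y} := by
  have hker : μ (LinearMap.ker ℓ) = 0 :=
    Measure.addHaar_submodule μ _ (by rwa [ne_eq, LinearMap.ker_eq_top])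
  filter_upwards [measure_eq_zero_iff_ae_notMem.mp hker] with y hy
  exact propext ⟨le_of_lt, fun h => lt_of_le_of_ne h (Ne.symm hy)⟩

theorem sq_mul_exp_neg_sq_div_le {a : ℝ} (ha : 0 < a) (r : ℝ) :
    r ^ 2 * exp (-r ^ 2 / a) ≤ 2 * a * exp (-r ^ 2 / (2 * a)) := by
  have hs : r ^ 2 / (2 * a) ≤ exp (r ^ 2 / (2 * a)) := by
    linarith [add_one_le_exp (r ^ 2 / (2 * a))]
  calc r ^ 2 * exp (-r ^ 2 / a)
      = 2 * a * (r ^ 2 / (2 * a)) * exp (-r ^ 2 / a) := by field_simp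
    _ ≤ 2 * a * exp (r ^ 2 / (2 * a)) * exp (-r ^ 2 / a) := by gcongr
    _ = 2 * a * exp (-r ^ 2 / (2 * a)) := by
        rw [mul_assoc, ← exp_add]
        congr 2
        field_simp
        ring

section

variable {E : Type*} [NormedAddCommGroup E] [InnerProductSpace ℝ E]

theorem reflection_orthogonal_singleton_sub_self {e : E} (he : ‖e‖ = 1) (y : E) :
    (ℝ ∙ e)ᗮ.reflection y - y = (-2 * ⟪e, y⟫_ℝ) • e := by
  rw [Submodule.reflection_orthogonal_apply, Submodule.reflection_singleton_apply, he]
  simp only [one_pow, RCLike.ofReal_real_eq_id, id, div_one, two_smul, neg_sub]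
  module

theorem inner_reflection_orthogonal_singleton {e : E} (he : ‖e‖ = 1) (y : E) :
    ⟪e, (ℝ ∙ e)ᗮ.reflection y⟫_ℝ = -⟪e, y⟫_ℝ := by
  have h := congrArg (⟪e, ·⟫_ℝ) (reflection_orthogonal_singleton_sub_self he y)
  simp only [inner_sub_right, real_inner_smul_right, real_inner_self_eq_norm_sq, he] at h
  linarith

theorem norm_reflection_orthogonal_singleton_sub_self {e : E} (he : ‖e‖ = 1) (y : E) :
    ‖(ℝ ∙ e)ᗮ.reflection y - y‖ = 2 * |⟪e, y⟫_ℝ| := by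
  rw [reflection_orthogonal_singleton_sub_self he, norm_smul, he, Real.norm_eq_abs, abs_mul]
  norm_num

noncomputable def heatKernel (ν t : ℝ) (y : E) : ℝ :=
  (4 * π * ν * t) ^ (-(Module.finrank ℝ E : ℝ) / 2) * exp (-‖y‖ ^ 2 / (4 * ν * t))

variable {ν t : ℝ}

theorem heatKernel_nonneg (hν : 0 ≤ ν) (ht : 0 ≤ t) (y : E) : 0 ≤ heatKernel ν t y := by
  unfold heatKernel
  positivity

theorem heatKernel_map_linearIsometryEquiv (R : E ≃ₗᵢ[ℝ] E) (y : E) :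
    heatKernel ν t (R y) = heatKernel ν t y := by
  simp [heatKernel]

@[fun_prop]
theorem continuous_heatKernel : Continuous (heatKernel ν t : E → ℝ) := by
  unfold heatKernel
  fun_prop

variable [FiniteDimensional ℝ E] [MeasurableSpace E] [BorelSpace E]

theorem integral_mul_eq_setIntegral_sub_reflection {e : E} (he : ‖e‖ = 1) {F k : E → ℝ}
    (hk : ∀ y, k ((ℝ ∙ e)ᗮ.reflection y) = -k y) (x : E)
    (hint : Integrable fun y => F (x - y) * k y) :
    ∫ y, F (x - y) * k y =
      ∫ y in {y | 0 ≤ ⟪e, y⟫_ℝ}, (F (x - y) - F (x - (ℝ ∙ e)ᗮ.reflection y)) * k y := by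
  set R := (ℝ ∙ e)ᗮ.reflection
  have hS : MeasurableSet {y : E | 0 ≤ ⟪e, y⟫_ℝ} := measurableSet_le measurable_const (by fun_prop)
  have hRS : R ⁻¹' {y | 0 ≤ ⟪e, y⟫_ℝ}ᶜ =ᵐ[volume] {y | 0 ≤ ⟪e, y⟫_ℝ} := by
    have hpre : R ⁻¹' {y | 0 ≤ ⟪e, y⟫_ℝ}ᶜ = {y | 0 < innerₗ E e y} := by
      ext y
      simp [R, inner_reflection_orthogonal_singleton he]
    have hℓ : innerₗ E e ≠ 0 := fun h => by
      simpa [he] using LinearMap.congr_fun h e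
    rw [hpre]
    exact setOf_pos_ae_eq_setOf_nonneg volume hℓ
  rw [integral_eq_setIntegral_add_comp R.measurePreserving R.toHomeomorph.measurableEmbedding
    hS hRS hint]
  refine setIntegral_congr_fun hS fun y _ => ?_
  simp only [hk]
  ring

theorem abs_integral_mul_inner_mul_le {e : E} (he : ‖e‖ = 1) {F ρ : E → ℝ} {L : ℝ}
    (hFL : ∀ u v, |F u - F v| ≤ L * ‖u - v‖) (hρ : ∀ y, ρ ((ℝ ∙ e)ᗮ.reflection y) = ρ y)
    (hρ0 : ∀ y, 0 ≤ ρ y) (x : E) (hint : Integrable fun y => F (x - y) * (⟪e, y⟫_ℝ * ρ y))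
    (hρint : Integrable fun y => ⟪e, y⟫_ℝ * ⟪e, y⟫_ℝ * ρ y) :
    |∫ y, F (x - y) * (⟪e, y⟫_ℝ * ρ y)| ≤
      2 * L * ∫ y in {y | 0 ≤ ⟪e, y⟫_ℝ}, ⟪e, y⟫_ℝ * ⟪e, y⟫_ℝ * ρ y := by
  set R := (ℝ ∙ e)ᗮ.reflection
  have hS : MeasurableSet {y : E | 0 ≤ ⟪e, y⟫_ℝ} := measurableSet_le measurable_const (by fun_prop)
  have hk : ∀ y, ⟪e, R y⟫_ℝ * ρ (R y) = -(⟪e, y⟫_ℝ * ρ y) := fun y => by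
    rw [inner_reflection_orthogonal_singleton he, hρ, neg_mul]
  rw [integral_mul_eq_setIntegral_sub_reflection he hk x hint, ← integral_const_mul,
    ← Real.norm_eq_abs]
  refine norm_integral_le_of_norm_le (hρint.const_mul _).integrableOn ?_
  filter_upwards [ae_restrict_mem hS] with y (hy : 0 ≤ ⟪e, y⟫_ℝ)
  have hF : |F (x - y) - F (x - R y)| ≤ L * (2 * ⟪e, y⟫_ℝ) := by
    have h := hFL (x - y) (x - R y)
    rwa [sub_sub_sub_cancel_left, norm_reflection_orthogonal_singleton_sub_self he,
      abs_of_nonneg hy] at h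
  calc ‖(F (x - y) - F (x - R y)) * (⟪e, y⟫_ℝ * ρ y)‖
      = |F (x - y) - F (x - R y)| * (⟪e, y⟫_ℝ * ρ y) := by
        rw [Real.norm_eq_abs, abs_mul, abs_of_nonneg (mul_nonneg hy (hρ0 y))]
    _ ≤ L * (2 * ⟪e, y⟫_ℝ) * (⟪e, y⟫_ℝ * ρ y) := by gcongr; exact mul_nonneg hy (hρ0 y)
    _ = 2 * L * (⟪e, y⟫_ℝ * ⟪e, y⟫_ℝ * ρ y) := by ring

theorem integrable_exp_neg_sq_norm_div {a : ℝ} (ha : 0 < a) :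
    Integrable fun y : E => exp (-‖y‖ ^ 2 / a) := by
  have h := GaussianFourier.integrable_cexp_neg_mul_sq_norm_add (V := E) (b := (a⁻¹ : ℂ))
    (by simpa using ha) 0 0
  refine h.norm.congr (ae_of_all _ fun y => ?_)
  simp [Complex.norm_exp, ← Complex.ofReal_pow]
  ring

theorem integrable_sq_norm_mul_exp_neg_sq_norm_div {a : ℝ} (ha : 0 < a) :
    Integrable fun y : E => ‖y‖ ^ 2 * exp (-‖y‖ ^ 2 / a) := by
  refine ((integrable_exp_neg_sq_norm_div (by positivity : 0 < 2 * a)).const_mul (2 * a)).mono'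
    (by fun_prop) (ae_of_all _ fun y => ?_)
  rw [Real.norm_of_nonneg (by positivity)]
  exact sq_mul_exp_neg_sq_div_le ha ‖y‖

theorem integrable_heatKernel (hν : 0 < ν) (ht : 0 < t) :
    Integrable (heatKernel ν t : E → ℝ) :=
  (integrable_exp_neg_sq_norm_div (by positivity)).const_mul _

theorem integrable_sq_norm_mul_heatKernel (hν : 0 < ν) (ht : 0 < t) :
    Integrable fun y : E => ‖y‖ ^ 2 * heatKernel ν t y := by
  have h := (integrable_sq_norm_mul_exp_neg_sq_norm_div (E := E)
    (by positivity : 0 < 4 * ν * t)).const_mul ((4 * π * ν * t) ^ (-(Module.finrank ℝ E : ℝ) / 2))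
  refine h.congr (ae_of_all _ fun y => ?_)
  simp only [heatKernel]
  ring

theorem integrable_inner_mul_heatKernel (hν : 0 < ν) (ht : 0 < t) (e : E) :
    Integrable fun y => ⟪e, y⟫_ℝ * heatKernel ν t y := by
  refine (((integrable_heatKernel hν ht).add (integrable_sq_norm_mul_heatKernel hν ht)).const_mul
    ‖e‖).mono' (by fun_prop) (ae_of_all _ fun y => ?_)
  have hG := heatKernel_nonneg hν.le ht.le y
  have hy : ‖y‖ ≤ 1 + ‖y‖ ^ 2 := by nlinarith [sq_nonneg (‖y‖ - 1)]
  rw [norm_mul, Real.norm_eq_abs, Real.norm_of_nonneg hG]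
  calc |⟪e, y⟫_ℝ| * heatKernel ν t y ≤ ‖e‖ * ‖y‖ * heatKernel ν t y := by
        gcongr; exact abs_real_inner_le_norm e y
    _ ≤ ‖e‖ * (1 + ‖y‖ ^ 2) * heatKernel ν t y := by gcongr
    _ = ‖e‖ * (heatKernel ν t y + ‖y‖ ^ 2 * heatKernel ν t y) := by ring

theorem integrable_inner_mul_inner_mul_heatKernel (hν : 0 < ν) (ht : 0 < t) (e : E) :
    Integrable fun y => ⟪e, y⟫_ℝ * ⟪e, y⟫_ℝ * heatKernel ν t y := by
  refine ((integrable_sq_norm_mul_heatKernel hν ht).const_mul (‖e‖ ^ 2)).mono' (by fun_prop)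
    (ae_of_all _ fun y => ?_)
  have hG := heatKernel_nonneg hν.le ht.le y
  rw [norm_mul, norm_mul, Real.norm_eq_abs, Real.norm_of_nonneg hG, ← sq, ← mul_assoc, ← mul_pow]
  gcongr
  exact abs_real_inner_le_norm e y

theorem abs_integral_mul_heatKernel_deriv_le {e : E} (he : ‖e‖ = 1) (hν : 0 < ν) (ht : 0 < t)
    {F : E → ℝ} {L : ℝ} (hFb : ∃ M, ∀ x, |F x| ≤ M)
    (hFL : ∀ u v, |F u - F v| ≤ L * ‖u - v‖) (x : E) :
    |∫ y, F (x - y) * ((-⟪e, y⟫_ℝ / (2 * ν * t)) * heatKernel ν t y)| ≤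
      L * ∫ y in {y | 0 ≤ ⟪e, y⟫_ℝ}, (⟪e, y⟫_ℝ / (ν * t)) * ⟪e, y⟫_ℝ * heatKernel ν t y := by
  obtain ⟨M, hM⟩ := hFb
  have hL : 0 ≤ L := by simpa [he] using (abs_nonneg _).trans (hFL e 0)
  have hF : Continuous F := (LipschitzWith.of_dist_le_mul (K := ⟨L, hL⟩) fun u v => by
    rw [Real.dist_eq, dist_eq_norm]; exact hFL u v).continuous
  have hint : Integrable fun y => F (x - y) * (⟪e, y⟫_ℝ * heatKernel ν t y) :=
    (integrable_inner_mul_heatKernel hν ht e).bdd_mul (by fun_prop) (ae_of_all _ fun y => hM _)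
  calc |∫ y, F (x - y) * ((-⟪e, y⟫_ℝ / (2 * ν * t)) * heatKernel ν t y)|
      = |-(2 * ν * t)⁻¹ * ∫ y, F (x - y) * (⟪e, y⟫_ℝ * heatKernel ν t y)| := by
        rw [← integral_const_mul]
        congr 2 with y
        ring
    _ = (2 * ν * t)⁻¹ * |∫ y, F (x - y) * (⟪e, y⟫_ℝ * heatKernel ν t y)| := by
        rw [abs_mul, abs_neg, abs_of_pos (by positivity)]
    _ ≤ (2 * ν * t)⁻¹ * (2 * L *
          ∫ y in {y | 0 ≤ ⟪e, y⟫_ℝ}, ⟪e, y⟫_ℝ * ⟪e, y⟫_ℝ * heatKernel ν t y) := by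
        gcongr
        exact abs_integral_mul_inner_mul_le he hFL (heatKernel_map_linearIsometryEquiv _)
          (heatKernel_nonneg hν.le ht.le) x hint (integrable_inner_mul_inner_mul_heatKernel hν ht e)
    _ = L * ∫ y in {y | 0 ≤ ⟪e, y⟫_ℝ}, (⟪e, y⟫_ℝ / (ν * t)) * ⟪e, y⟫_ℝ * heatKernel ν t y := by
        rw [← integral_const_mul, ← integral_const_mul, ← integral_const_mul]
        congr 1 with y
        field_simp

end

theorem lipschitz_convolution_derivative_bound_general (n : ℕ) (ν t : ℝ)
    (hν : 0 < ν) (ht : 0 < t) (i : Fin n) (F : EuclideanSpace ℝ (Fin n) → ℝ) (L : ℝ)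
    (hFb : ∃ M : ℝ, ∀ x, |F x| ≤ M)
    (hFL : ∀ u v : EuclideanSpace ℝ (Fin n), |F u - F v| ≤ L * ‖u - v‖) :
    ∀ x : EuclideanSpace ℝ (Fin n),
      |∫ y : EuclideanSpace ℝ (Fin n),
          F (x - y) * ((-(y i) / (2*ν*t)) *
            ((4*π*ν*t) ^ (-(n:ℝ)/2) * Real.exp (-‖y‖^2 / (4*ν*t))))|
        ≤ L * ∫ y in {y : EuclideanSpace ℝ (Fin n) | 0 ≤ y i},
            (y i / (ν*t)) * y i *
              ((4*π*ν*t) ^ (-(n:ℝ)/2) * Real.exp (-‖y‖^2 / (4*ν*t))) := by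
  intro x
  have hcoord : ∀ y : EuclideanSpace ℝ (Fin n), y i = ⟪EuclideanSpace.single i 1, y⟫_ℝ := by
    simp [EuclideanSpace.inner_single_left]
  have hkernel : ∀ y : EuclideanSpace ℝ (Fin n),
      (4*π*ν*t) ^ (-(n:ℝ)/2) * Real.exp (-‖y‖^2 / (4*ν*t)) = heatKernel ν t y := by
    simp [heatKernel]
  simp_rw [hcoord, hkernel]
  exact abs_integral_mul_heatKernel_deriv_le (by simp) hν ht hFb hFL x

theorem lipschitz_convolution_derivative_bound (n : ℕ) (hn : 1 ≤ n) (ν t : ℝ)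
    (hν : 0 < ν) (ht : 0 < t) (i : Fin n) (F : EuclideanSpace ℝ (Fin n) → ℝ) (L : ℝ)
    (hFb : ∃ M : ℝ, ∀ x, |F x| ≤ M)
    (hFL : ∀ u v : EuclideanSpace ℝ (Fin n), |F u - F v| ≤ L * ‖u - v‖) :
    ∀ x : EuclideanSpace ℝ (Fin n),
      |∫ y : EuclideanSpace ℝ (Fin n),
          F (x - y) * ((-(y i) / (2*ν*t)) *
            ((4*π*ν*t) ^ (-(n:ℝ)/2) * Real.exp (-‖y‖^2 / (4*ν*t))))|
        ≤ L * ∫ y in {y : EuclideanSpace ℝ (Fin n) | 0 ≤ y i},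
            (y i / (ν*t)) * y i *
              ((4*π*ν*t) ^ (-(n:ℝ)/2) * Real.exp (-‖y‖^2 / (4*ν*t))) :=
  lipschitz_convolution_derivative_bound_general n ν t hν ht i F L hFb hFL
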